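/- Assume there is c > 0 with p(x'|x,a,μ,μ̃) ≥ c for all x', x, a, μ, μ̃, and assume L_p^{loc} < (1/2)|𝒳|c, where |𝒳| is the cardinality of 𝒳. Then for every fixed (x,a) ∈ 𝒳 × 𝒜, every distribution μ on 𝒳 and every Q-table Q, the one-step map Φ has a unique fixed point in the set of distributions on 𝒳, denoted μ̃*^{φ,(x,a)}_{μ,Q}. -/

import Mathlib

open Finset

/-- A probability distribution on a finite set, viewed as a nonnegative
function summing to one. -/
def IsDist {X : Type*} [Fintype X] (μ : X → ℝ) : Prop :=
  (∀ x, 0 ≤ μ x) ∧ ∑ x, μ x = 1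

/-- The ℓ¹ distance `‖μ - μ'‖₁` between two functions on a finite set. -/
def l1Dist {X : Type*} [Fintype X] (μ μ' : X → ℝ) : ℝ := ∑ x, |μ x - μ' x|

/-- The softmin map with parameter `φ`. -/
noncomputable def softmin {A : Type*} [Fintype A] (φ : ℝ) (z : A → ℝ) (a : A) : ℝ :=
  Real.exp (-φ * z a) / ∑ a', Real.exp (-φ * z a')

/-- The one-step map `Φ` associated with `(x,a)`, `μ` and `Q`. -/
noncomputable def stepMap {X A : Type*} [Fintype X] [Fintype A] [DecidableEq X]
    (φ : ℝ) (p : X → A → (X → ℝ) → (X → ℝ) → X → ℝ)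
    (x : X) (a : A) (μ : X → ℝ) (Q : X → A → ℝ) (μt : X → ℝ) (y : X) : ℝ :=
  (∑ x' ∈ Finset.univ.erase x, μt x' * ∑ a', softmin φ (Q x') a' * p x' a' μ μt y)
    + μt x * p x a μ μt y

set_option linter.unusedSectionVars false

lemma l1Dist_nonneg {X : Type*} [Fintype X] (f g : X → ℝ) : 0 ≤ l1Dist f g :=
  Finset.sum_nonneg fun _ _ => abs_nonneg _

lemma eq_of_l1Dist_eq_zero {X : Type*} [Fintype X] {f g : X → ℝ}
    (h : l1Dist f g = 0) : f = g := by
  funext i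
  have h2 := (Finset.sum_eq_zero_iff_of_nonneg (fun j _ => abs_nonneg (f j - g j))).1 h i
    (Finset.mem_univ i)
  have := abs_eq_zero.1 h2
  linarith

lemma isDist_uniform {X : Type*} [Fintype X] [Nonempty X] :
    IsDist (fun _ : X => (Fintype.card X : ℝ)⁻¹) := by
  have hcard : (0:ℝ) < Fintype.card X := by exact_mod_cast Fintype.card_pos
  constructor
  · intro _; positivity
  · rw [Finset.sum_const, Finset.card_univ, nsmul_eq_mul]
    field_simp

lemma piLp_dist_eq_l1 {X : Type*} [Fintype X] (f g : PiLp 1 (fun _ : X => ℝ)) :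
    dist f g = l1Dist f g := by
  simp [PiLp.dist_eq_sum (p := 1) (by norm_num), Real.dist_eq, l1Dist]

lemma banach_on_dist {X : Type*} [Fintype X] [Nonempty X]
    (T : (X → ℝ) → (X → ℝ)) (hT : ∀ f, IsDist f → IsDist (T f))
    (k : ℝ) (hk0 : 0 ≤ k) (hk1 : k < 1)
    (hlip : ∀ f g, IsDist f → IsDist g → l1Dist (T f) (T g) ≤ k * l1Dist f g) :
    ∃! f : X → ℝ, IsDist f ∧ T f = f := by
  classical
  let S : Set (PiLp 1 (fun _ : X => ℝ)) := {f | IsDist f}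
  have hSc : IsClosed S := by
    have h1 : S = (⋂ i : X, {f : PiLp 1 (fun _ : X => ℝ) | 0 ≤ f i})
        ∩ {f : PiLp 1 (fun _ : X => ℝ) | ∑ i, f i = 1} := by
      ext f
      simp [S, IsDist, Set.mem_iInter, forall_and]
    rw [h1]
    have heval : ∀ i : X, Continuous fun f : PiLp 1 (fun _ : X => ℝ) => f i := by
      intro i
      exact (continuous_apply i).comp (PiLp.continuous_ofLp (p := 1) (β := fun _ : X => ℝ))
    refine IsClosed.inter (isClosed_iInter fun i => ?_) ?_
    · exact isClosed_le continuous_const (heval i)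
    · exact isClosed_eq (continuous_finset_sum _ fun i _ => heval i) continuous_const
  haveI : Nonempty S := ⟨⟨WithLp.toLp 1 (fun _ => (Fintype.card X : ℝ)⁻¹), isDist_uniform⟩⟩
  haveI : CompleteSpace S := hSc.completeSpace_coe
  let F : S → S := fun f => ⟨WithLp.toLp 1 (T f.1), hT f.1 f.2⟩
  have hC : ContractingWith k.toNNReal F := by
    constructor
    · exact Real.toNNReal_lt_one.2 hk1
    · refine LipschitzWith.of_dist_le_mul fun f g => ?_
      rw [Subtype.dist_eq, Subtype.dist_eq, piLp_dist_eq_l1, piLp_dist_eq_l1,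
        Real.coe_toNNReal k hk0]
      exact hlip f.1 g.1 f.2 g.2
  obtain ⟨x₀, hfix⟩ : ∃ x₀ : S, F x₀ = x₀ := ⟨hC.fixedPoint F, hC.fixedPoint_isFixedPt⟩
  have hfix' : T x₀.1 = x₀.1 := by exact congrArg (fun v : S => WithLp.ofLp v.1) hfix
  refine ⟨x₀.1, ⟨x₀.2, hfix'⟩, ?_⟩
  rintro g ⟨hg, hgfix⟩
  have hb : l1Dist g x₀.1 ≤ k * l1Dist g x₀.1 := by
    have := hlip g x₀.1 hg x₀.2
    rwa [hgfix, hfix'] at this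
  have hd0 : l1Dist g x₀.1 = 0 := by
    have h1 := l1Dist_nonneg g x₀.1
    nlinarith
  exact eq_of_l1Dist_eq_zero hd0

lemma softmin_nonneg {A : Type*} [Fintype A] (φ : ℝ) (z : A → ℝ) (a : A) :
    0 ≤ softmin φ z a :=
  div_nonneg (Real.exp_nonneg _) (Finset.sum_nonneg fun _ _ => Real.exp_nonneg _)

lemma softmin_sum_one {A : Type*} [Fintype A] [Nonempty A] (φ : ℝ) (z : A → ℝ) :
    ∑ a, softmin φ z a = 1 := by
  have hpos : 0 < ∑ a', Real.exp (-φ * z a') :=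
    Finset.sum_pos (fun _ _ => Real.exp_pos _) Finset.univ_nonempty
  simp only [softmin]
  rw [← Finset.sum_div]
  exact div_self (ne_of_gt hpos)

noncomputable def ker {X A : Type*} [Fintype X] [Fintype A] [DecidableEq X]
    (φ : ℝ) (p : X → A → (X → ℝ) → (X → ℝ) → X → ℝ)
    (x : X) (a : A) (μ : X → ℝ) (Q : X → A → ℝ) (μt : X → ℝ) (x' y : X) : ℝ :=
  if x' = x then p x a μ μt y else ∑ a', softmin φ (Q x') a' * p x' a' μ μt y

lemma stepMap_eq_sum {X A : Type*} [Fintype X] [Fintype A] [DecidableEq X]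
    (φ : ℝ) (p : X → A → (X → ℝ) → (X → ℝ) → X → ℝ)
    (x : X) (a : A) (μ : X → ℝ) (Q : X → A → ℝ) (μt : X → ℝ) (y : X) :
    stepMap φ p x a μ Q μt y = ∑ x', μt x' * ker φ p x a μ Q μt x' y := by
  rw [show (∑ x', μt x' * ker φ p x a μ Q μt x' y)
      = (∑ x' ∈ Finset.univ.erase x, μt x' * ker φ p x a μ Q μt x' y)
        + μt x * ker φ p x a μ Q μt x y from
    (Finset.sum_erase_add _ _ (Finset.mem_univ x)).symm]
  rw [stepMap]
  congr 1
  · refine Finset.sum_congr rfl fun x' hx' => ?_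
    rw [ker, if_neg (Finset.ne_of_mem_erase hx')]
  · rw [ker, if_pos rfl]

section KerLemmas

variable {X A : Type*} [Fintype X] [Fintype A] [Nonempty A] [DecidableEq X]
  (φ : ℝ) (p : X → A → (X → ℝ) → (X → ℝ) → X → ℝ)
  (x : X) (a : A) (μ : X → ℝ) (Q : X → A → ℝ)

lemma ker_ge {c : ℝ}
    (hlow : ∀ (x' x : X) (a : A) (μ μt : X → ℝ), IsDist μ → IsDist μt →
      c ≤ p x a μ μt x')
    {μt : X → ℝ} (hμ : IsDist μ) (hμt : IsDist μt) (x' y : X) :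
    c ≤ ker φ p x a μ Q μt x' y := by
  rw [ker]
  split_ifs with h
  · exact hlow y x a μ μt hμ hμt
  · calc c = (∑ a', softmin φ (Q x') a') * c := by rw [softmin_sum_one, one_mul]
    _ = ∑ a', softmin φ (Q x') a' * c := by rw [Finset.sum_mul]
    _ ≤ ∑ a', softmin φ (Q x') a' * p x' a' μ μt y :=
      Finset.sum_le_sum fun a' _ => mul_le_mul_of_nonneg_left
        (hlow y x' a' μ μt hμ hμt) (softmin_nonneg _ _ _)

lemma ker_rowsum
    (hp : ∀ x a μ μt, IsDist μ → IsDist μt → IsDist (p x a μ μt))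
    {μt : X → ℝ} (hμ : IsDist μ) (hμt : IsDist μt) (x' : X) :
    ∑ y, ker φ p x a μ Q μt x' y = 1 := by
  simp only [ker]
  split_ifs with h
  · exact (hp x a μ μt hμ hμt).2
  · rw [Finset.sum_comm]
    calc ∑ a', ∑ y, softmin φ (Q x') a' * p x' a' μ μt y
        = ∑ a', softmin φ (Q x') a' * ∑ y, p x' a' μ μt y := by
          simp [Finset.mul_sum]
    _ = ∑ a', softmin φ (Q x') a' := by
          refine Finset.sum_congr rfl fun a' _ => ?_
          rw [(hp x' a' μ μt hμ hμt).2, mul_one]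
    _ = 1 := softmin_sum_one _ _

lemma ker_lip {Lpl : ℝ}
    (hploc : ∀ x a μ μt μt', IsDist μ → IsDist μt → IsDist μt' →
      l1Dist (p x a μ μt) (p x a μ μt') ≤ Lpl * l1Dist μt μt')
    {μt μt' : X → ℝ} (hμ : IsDist μ) (hμt : IsDist μt) (hμt' : IsDist μt') (x' : X) :
    ∑ y, |ker φ p x a μ Q μt x' y - ker φ p x a μ Q μt' x' y|
      ≤ Lpl * l1Dist μt μt' := by
  simp only [ker]
  split_ifs with h
  · exact hploc x a μ μt μt' hμ hμt hμt'
  · calc ∑ y, |(∑ a', softmin φ (Q x') a' * p x' a' μ μt y)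
          - ∑ a', softmin φ (Q x') a' * p x' a' μ μt' y|
        = ∑ y, |∑ a', softmin φ (Q x') a' * (p x' a' μ μt y - p x' a' μ μt' y)| := by
          refine Finset.sum_congr rfl fun y _ => ?_
          rw [← Finset.sum_sub_distrib]
          congr 1
          exact Finset.sum_congr rfl fun a' _ => by ring
    _ ≤ ∑ y, ∑ a', softmin φ (Q x') a' * |p x' a' μ μt y - p x' a' μ μt' y| := by
          refine Finset.sum_le_sum fun y _ => ?_
          refine (Finset.abs_sum_le_sum_abs _ _).trans ?_
          refine Finset.sum_le_sum fun a' _ => ?_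
          rw [abs_mul, abs_of_nonneg (softmin_nonneg _ _ _)]
    _ = ∑ a', softmin φ (Q x') a' * ∑ y, |p x' a' μ μt y - p x' a' μ μt' y| := by
          rw [Finset.sum_comm]; simp [Finset.mul_sum]
    _ ≤ ∑ a', softmin φ (Q x') a' * (Lpl * l1Dist μt μt') := by
          refine Finset.sum_le_sum fun a' _ => mul_le_mul_of_nonneg_left
            (hploc x' a' μ μt μt' hμ hμt hμt') (softmin_nonneg _ _ _)
    _ = Lpl * l1Dist μt μt' := by rw [← Finset.sum_mul, softmin_sum_one, one_mul]

end KerLemmas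

section Main

variable {X A : Type*} [Fintype X] [Fintype A] [Nonempty X] [Nonempty A] [DecidableEq X]

lemma stepMap_preserves
    (φ : ℝ) (p : X → A → (X → ℝ) → (X → ℝ) → X → ℝ)
    (x : X) (a : A) (μ : X → ℝ) (Q : X → A → ℝ)
    (hp : ∀ x a μ μt, IsDist μ → IsDist μt → IsDist (p x a μ μt))
    {c : ℝ} (hc : 0 < c)
    (hlow : ∀ (x' x : X) (a : A) (μ μt : X → ℝ), IsDist μ → IsDist μt →
      c ≤ p x a μ μt x')
    (hμ : IsDist μ) {μt : X → ℝ} (hμt : IsDist μt) :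
    IsDist (stepMap φ p x a μ Q μt) := by
  constructor
  · intro y
    rw [stepMap_eq_sum]
    refine Finset.sum_nonneg fun x' _ => mul_nonneg (hμt.1 x') ?_
    exact le_trans hc.le (ker_ge φ p x a μ Q hlow hμ hμt x' y)
  · calc ∑ y, stepMap φ p x a μ Q μt y
        = ∑ y, ∑ x', μt x' * ker φ p x a μ Q μt x' y := by
          exact Finset.sum_congr rfl fun y _ => stepMap_eq_sum _ _ _ _ _ _ _ _
    _ = ∑ x', μt x' * ∑ y, ker φ p x a μ Q μt x' y := by
          rw [Finset.sum_comm]; simp [Finset.mul_sum]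
    _ = ∑ x', μt x' := by
          refine Finset.sum_congr rfl fun x' _ => ?_
          rw [ker_rowsum φ p x a μ Q hp hμ hμt x', mul_one]
    _ = 1 := hμt.2

lemma stepMap_contract
    (φ : ℝ) (p : X → A → (X → ℝ) → (X → ℝ) → X → ℝ)
    (x : X) (a : A) (μ : X → ℝ) (Q : X → A → ℝ)
    {Lpl : ℝ}
    (hp : ∀ x a μ μt, IsDist μ → IsDist μt → IsDist (p x a μ μt))
    (hploc : ∀ x a μ μt μt', IsDist μ → IsDist μt → IsDist μt' →
      l1Dist (p x a μ μt) (p x a μ μt') ≤ Lpl * l1Dist μt μt')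
    {c : ℝ}
    (hlow : ∀ (x' x : X) (a : A) (μ μt : X → ℝ), IsDist μ → IsDist μt →
      c ≤ p x a μ μt x')
    (hμ : IsDist μ) {μt μt' : X → ℝ} (hμt : IsDist μt) (hμt' : IsDist μt') :
    l1Dist (stepMap φ p x a μ Q μt) (stepMap φ p x a μ Q μt')
      ≤ (1 - (Fintype.card X : ℝ) * c + Lpl) * l1Dist μt μt' := by
  set d := l1Dist μt μt' with hd
  set K := ker φ p x a μ Q μt with hK
  set K' := ker φ p x a μ Q μt' with hK'
  have hz : ∑ x', (μt x' - μt' x') = 0 := by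
    rw [Finset.sum_sub_distrib, hμt.2, hμt'.2]; ring
  have key : ∀ y, |stepMap φ p x a μ Q μt y - stepMap φ p x a μ Q μt' y|
      ≤ ∑ x', (|μt x' - μt' x'| * (K x' y - c) + μt' x' * |K x' y - K' x' y|) := by
    intro y
    have h1 : stepMap φ p x a μ Q μt y - stepMap φ p x a μ Q μt' y
        = (∑ x', ((μt x' - μt' x') * (K x' y - c) + μt' x' * (K x' y - K' x' y)))
          + c * ∑ x', (μt x' - μt' x') := by
      rw [stepMap_eq_sum, stepMap_eq_sum, Finset.mul_sum, ← Finset.sum_add_distrib,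
        ← Finset.sum_sub_distrib]
      exact Finset.sum_congr rfl fun x' _ => by ring
    rw [h1, hz, mul_zero, add_zero]
    refine (Finset.abs_sum_le_sum_abs _ _).trans (Finset.sum_le_sum fun x' _ => ?_)
    refine (abs_add_le _ _).trans ?_
    rw [abs_mul, abs_mul, abs_of_nonneg (sub_nonneg.2 (ker_ge φ p x a μ Q hlow hμ hμt x' y)),
      abs_of_nonneg (hμt'.1 x')]
  calc l1Dist (stepMap φ p x a μ Q μt) (stepMap φ p x a μ Q μt')
      ≤ ∑ y, ∑ x', (|μt x' - μt' x'| * (K x' y - c) + μt' x' * |K x' y - K' x' y|) :=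
        Finset.sum_le_sum fun y _ => key y
    _ = ∑ x', (|μt x' - μt' x'| * (∑ y, K x' y - (Fintype.card X : ℝ) * c)
          + μt' x' * ∑ y, |K x' y - K' x' y|) := by
        rw [Finset.sum_comm]
        refine Finset.sum_congr rfl fun x' _ => ?_
        rw [Finset.sum_add_distrib, ← Finset.mul_sum, ← Finset.mul_sum,
          Finset.sum_sub_distrib, Finset.sum_const, Finset.card_univ, nsmul_eq_mul]
    _ ≤ ∑ x', (|μt x' - μt' x'| * (1 - (Fintype.card X : ℝ) * c)
          + μt' x' * (Lpl * d)) := by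
        refine Finset.sum_le_sum fun x' _ => ?_
        have h1 : ∑ y, K x' y - (Fintype.card X : ℝ) * c
            ≤ 1 - (Fintype.card X : ℝ) * c := by
          rw [hK, ker_rowsum φ p x a μ Q hp hμ hμt x']
        have h2 : ∑ y, |K x' y - K' x' y| ≤ Lpl * d := by
          rw [hK, hK']
          exact ker_lip φ p x a μ Q hploc hμ hμt hμt' x'
        exact add_le_add (mul_le_mul_of_nonneg_left h1 (abs_nonneg _))
          (mul_le_mul_of_nonneg_left h2 (hμt'.1 x'))
    _ = (1 - (Fintype.card X : ℝ) * c) * d + Lpl * d := by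
        rw [Finset.sum_add_distrib, ← Finset.sum_mul, ← Finset.sum_mul, hμt'.2, one_mul,
          mul_comm]
        rfl
    _ = (1 - (Fintype.card X : ℝ) * c + Lpl) * d := by ring

end Main

/-- if `p(x'|x,a,μ,μ̃) ≥ c > 0` uniformly and `L_p^loc < |𝒳| c / 2`, then
for every `(x,a)`, every distribution `μ` and every Q-table `Q`, the one-step map `Φ` has a
unique fixed point among distributions on `𝒳`. -/
theorem stepMap_unique_fixed_point
    {X A : Type*} [Fintype X] [Fintype A] [Nonempty X] [Nonempty A] [DecidableEq X]
    (φ : ℝ) (hφ : 0 < φ)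
    (p : X → A → (X → ℝ) → (X → ℝ) → X → ℝ)
    (Lpl : ℝ) (hLpl : 0 ≤ Lpl)
    (hp : ∀ x a μ μt, IsDist μ → IsDist μt → IsDist (p x a μ μt))
    (hploc : ∀ x a μ μt μt', IsDist μ → IsDist μt → IsDist μt' →
      l1Dist (p x a μ μt) (p x a μ μt') ≤ Lpl * l1Dist μt μt')
    (c : ℝ) (hc : 0 < c)
    (hlow : ∀ (x' x : X) (a : A) (μ μt : X → ℝ), IsDist μ → IsDist μt →
      c ≤ p x a μ μt x')
    (hcontr : Lpl < (Fintype.card X : ℝ) * c / 2)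
    (x : X) (a : A) (μ : X → ℝ) (hμ : IsDist μ) (Q : X → A → ℝ) :
    ∃! μt : X → ℝ, IsDist μt ∧ stepMap φ p x a μ Q μt = μt := by
  classical
  have hcardpos : (0:ℝ) < Fintype.card X := by exact_mod_cast Fintype.card_pos
  have hncpos : 0 < (Fintype.card X : ℝ) * c := mul_pos hcardpos hc
  have hnc1 : (Fintype.card X : ℝ) * c ≤ 1 := by
    have hu : IsDist (fun _ : X => (Fintype.card X : ℝ)⁻¹) := isDist_uniform
    calc (Fintype.card X : ℝ) * c = ∑ _y : X, c := by
          rw [Finset.sum_const, Finset.card_univ, nsmul_eq_mul]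
      _ ≤ ∑ y, p x a μ (fun _ => (Fintype.card X : ℝ)⁻¹) y :=
          Finset.sum_le_sum fun y _ => hlow y x a μ _ hμ hu
      _ = 1 := (hp x a μ _ hμ hu).2
  set k : ℝ := 1 - (Fintype.card X : ℝ) * c + Lpl with hk
  have hk0 : 0 ≤ k := by simp only [hk]; linarith
  have hk1 : k < 1 := by simp only [hk]; nlinarith
  exact banach_on_dist (stepMap φ p x a μ Q)
    (fun f hf => stepMap_preserves φ p x a μ Q hp hc hlow hμ hf)
    k hk0 hk1
    (fun f g hf hg => stepMap_contract φ p x a μ Q hp hploc hlow hμ hf hg)
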